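/- arXiv:1104.1054 — 2 statements merged into one kernel-verified Lean document; each statement's English description precedes it below -/
import Mathlib

section
/- Let E be a meet semilattice with zero, F a tight filter in E, X ⊆ F a finite nonempty subset, and Y a finite subset with Y ∩ F = ∅. Then there is a nonzero element e ∈ E with e ≤ x for all x ∈ X and e ∧ y = 0 for all y ∈ Y. -/
variable {E : Type*} [SemilatticeInf E] [OrderBot E]

/-- A filter in a meet semilattice with zero (`⊥`): a nonempty, downward
directed, upward closed subset not containing `⊥`. -/
def IsFilt (F : Set E) : Prop :=
  F.Nonempty ∧ (⊥ : E) ∉ F ∧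
  (∀ x ∈ F, ∀ y : E, x ≤ y → y ∈ F) ∧
  (∀ x ∈ F, ∀ y ∈ F, ∃ z ∈ F, z ≤ x ∧ z ≤ y)

/-- A finite subset of `a↓` is a cover of `a` if every nonzero `x ≤ a` meets
some element of it. -/
def IsCover (A : Finset E) (a : E) : Prop :=
  (∀ x ∈ A, x ≤ a) ∧ ∀ x : E, x ≠ ⊥ → x ≤ a → ∃ y ∈ A, x ⊓ y ≠ ⊥

/-- A filter is tight if it meets every finite cover of each of its elements. -/
def IsTight (F : Set E) : Prop :=
  IsFilt F ∧ ∀ a ∈ F, ∀ A : Finset E, IsCover A a → ∃ y ∈ A, y ∈ F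

theorem IsFilt.exists_le_of_subset {F : Set E} (hF : IsFilt F) {X : Finset E}
    (hXF : ∀ x ∈ X, x ∈ F) : ∃ a ∈ F, ∀ x ∈ X, a ≤ x := by
  classical
  induction X using Finset.induction_on with
  | empty => exact ⟨_, hF.1.some_mem, by simp⟩
  | insert x X _ ih =>
    obtain ⟨a, haF, ha⟩ := ih fun z hz => hXF z (Finset.mem_insert_of_mem hz)
    obtain ⟨z, hzF, hzx, hza⟩ := hF.2.2.2 x (hXF x (Finset.mem_insert_self x X)) a haF
    refine ⟨z, hzF, fun w hw => ?_⟩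
    rcases Finset.mem_insert.mp hw with rfl | hw
    · exact hzx
    · exact hza.trans (ha w hw)

theorem isCover_image_inf {a : E} {Y : Finset E} [DecidableEq E]
    (hY : ∀ e, e ≠ ⊥ → e ≤ a → ∃ y ∈ Y, e ⊓ y ≠ ⊥) :
    IsCover (Y.image (a ⊓ ·)) a := by
  refine ⟨fun x hx => ?_, fun e he hea => ?_⟩
  · obtain ⟨y, -, rfl⟩ := Finset.mem_image.mp hx
    exact inf_le_left
  · obtain ⟨y, hyY, hey⟩ := hY e he hea
    refine ⟨a ⊓ y, Finset.mem_image_of_mem _ hyY, ?_⟩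
    rwa [← inf_assoc, inf_eq_left.mpr hea]

/-- Otherwise the meets `a ⊓ y`, `y ∈ Y`, cover `a`, so tightness puts one of them, hence some
`y ∈ Y`, in `F`. -/
theorem IsTight.exists_ne_bot_le_inf_eq_bot {F : Set E} (hF : IsTight F) {a : E} (ha : a ∈ F)
    {Y : Finset E} (hYF : ∀ y ∈ Y, y ∉ F) :
    ∃ e, e ≠ ⊥ ∧ e ≤ a ∧ ∀ y ∈ Y, e ⊓ y = ⊥ := by
  classical
  by_contra! hY
  obtain ⟨b, hbY, hbF⟩ := hF.2 a ha _ (isCover_image_inf hY)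
  obtain ⟨y, hyY, rfl⟩ := Finset.mem_image.mp hbY
  exact hYF y hyY (hF.1.2.2.1 _ hbF y inf_le_right)

theorem tight_filter_separation_general (F : Set E) (hF : IsTight F)
    (X Y : Finset E) (hXF : ∀ x ∈ X, x ∈ F)
    (hYF : ∀ y ∈ Y, y ∉ F) :
    ∃ e : E, e ≠ ⊥ ∧ (∀ x ∈ X, e ≤ x) ∧ ∀ y ∈ Y, e ⊓ y = ⊥ := by
  obtain ⟨a, haF, haX⟩ := hF.1.exists_le_of_subset hXF
  obtain ⟨e, he, hea, heY⟩ := hF.exists_ne_bot_le_inf_eq_bot haF hYF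
  exact ⟨e, he, fun x hx => hea.trans (haX x hx), heY⟩

/-- If `F` is a tight filter, `X ⊆ F` is finite and nonempty, and `Y` is a
finite set disjoint from `F`, then there is a nonzero element below every
element of `X` and orthogonal to every element of `Y`. -/
theorem tight_filter_separation (F : Set E) (hF : IsTight F)
    (X Y : Finset E) (hXne : X.Nonempty) (hXF : ∀ x ∈ X, x ∈ F)
    (hYF : ∀ y ∈ Y, y ∉ F) :
    ∃ e : E, e ≠ ⊥ ∧ (∀ x ∈ X, e ≤ x) ∧ ∀ y ∈ Y, e ⊓ y = ⊥ :=
  tight_filter_separation_general F hF X Y hXF hYF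
end

section
/- Let E be a meet semilattice with zero that is unambiguous (if e ∧ f ≠ 0 then e ≤ f or f ≤ e), pseudofinite, and satisfies the Dedekind height condition (for every nonzero e, the up-set e↑ is finite). Then every tight filter in E is an ultrafilter. -/
variable {E : Type*} [SemilatticeInf E] [OrderBot E]

/-- An ultrafilter: a maximal filter. -/
def IsUltra (F : Set E) : Prop :=
  IsFilt F ∧ ∀ G : Set E, IsFilt G → F ⊆ G → G = F

/-!
Let `G ⊇ F` be a filter and `b ∈ G`; then `b` meets every element of `F`, and by unambiguity
`b` lies above or below each of them. If some `a ∈ F` is below `b` we are done. Otherwise take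
`x ∈ F` minimal above `b` (there is one, as `b↑` is finite). If `b < x`, pseudofiniteness makes
the finitely many elements directly below `x` a cover of `x`, so tightness puts one of them, `y`,
in `F`. By unambiguity `y` is comparable with `b`: `b ≤ y` contradicts the minimality of `x`,
and `y ≤ b < x` forces `y = b`. Hence `b ∈ F`, and `G = F`.
-/

theorem IsFilt.ne_bot {F : Set E} (hF : IsFilt F) {b : E} (hb : b ∈ F) : b ≠ ⊥ :=
  fun h => hF.2.1 (h ▸ hb)

theorem IsFilt.inf_ne_bot {F : Set E} (hF : IsFilt F) {b c : E} (hb : b ∈ F) (hc : c ∈ F) :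
    b ⊓ c ≠ ⊥ := by
  obtain ⟨z, hz, hzb, hzc⟩ := hF.2.2.2 b hb c hc
  exact ne_bot_of_le_ne_bot (hF.ne_bot hz) (le_inf hzb hzc)

theorem isCover_toFinset_covBy {a b : E} (hfin : {g : E | g ⋖ a}.Finite)
    (dense : ∀ f, f < a → ∃ g, g ⋖ a ∧ f ≤ g) (hb : b ≠ ⊥) (hba : b < a) :
    IsCover hfin.toFinset a := by
  refine ⟨fun g hg => (hfin.mem_toFinset.1 hg).le, fun x hx hxa => ?_⟩
  rcases hxa.eq_or_lt with rfl | hxa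
  · obtain ⟨g, hg, hbg⟩ := dense b hba
    refine ⟨g, hfin.mem_toFinset.2 hg, ?_⟩
    rw [inf_eq_right.2 hg.le]
    exact ne_bot_of_le_ne_bot hb hbg
  · obtain ⟨g, hg, hxg⟩ := dense x hxa
    exact ⟨g, hfin.mem_toFinset.2 hg, by rwa [inf_eq_left.2 hxg]⟩

theorem IsTight.mem_of_forall_inf_ne_bot
    (unamb : ∀ e f : E, e ⊓ f ≠ ⊥ → e ≤ f ∨ f ≤ e)
    (pseudofin : ∀ e : E, {g : E | g ⋖ e}.Finite)
    (pseudodense : ∀ e f : E, f < e → ∃ g : E, g ⋖ e ∧ f ≤ g)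
    {F : Set E} (hF : IsTight F) {b : E} (hb : {x : E | b ≤ x}.Finite)
    (hbF : ∀ c ∈ F, b ⊓ c ≠ ⊥) : b ∈ F := by
  obtain ⟨⟨⟨a, ha⟩, -, hup, -⟩, htight⟩ := hF
  have hb0 : b ≠ ⊥ := fun h => hbF a ha (by rw [h, bot_inf_eq])
  rcases unamb a b (inf_comm b a ▸ hbF a ha) with hab | hba
  · exact hup a ha b hab
  obtain ⟨x, ⟨hxF, hbx⟩, hxmin⟩ :=
    (hb.subset fun x (hx : x ∈ F ∧ b ≤ x) => hx.2).exists_minimal ⟨a, ha, hba⟩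
  rcases hbx.eq_or_lt with rfl | hbx
  · exact hxF
  obtain ⟨y, hy, hyF⟩ :=
    htight x hxF _ (isCover_toFinset_covBy (pseudofin x) (pseudodense x) hb0 hbx)
  replace hy : y ⋖ x := (pseudofin x).mem_toFinset.1 hy
  rcases unamb b y (hbF y hyF) with hby | hyb
  · exact absurd (hxmin ⟨hyF, hby⟩ hy.le) hy.lt.not_ge
  · rcases hy.eq_or_eq hyb hbx.le with rfl | rfl
    · exact hyF
    · exact absurd hbx (lt_irrefl b)

/-- If `E` is unambiguous, pseudofinite and satisfies the Dedekind height
condition, then every tight filter in `E` is an ultrafilter. -/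
theorem tight_is_ultra_of_unambiguous
    (unamb : ∀ e f : E, e ⊓ f ≠ ⊥ → e ≤ f ∨ f ≤ e)
    (pseudofin : ∀ e : E, {g : E | g ⋖ e}.Finite)
    (pseudodense : ∀ e f : E, f < e → ∃ g : E, g ⋖ e ∧ f ≤ g)
    (dedekind : ∀ e : E, e ≠ ⊥ → {x : E | e ≤ x}.Finite)
    (F : Set E) (hF : IsTight F) : IsUltra F := by
  refine ⟨hF.1, fun G hG hFG => Set.Subset.antisymm (fun b hbG => ?_) hFG⟩
  exact hF.mem_of_forall_inf_ne_bot unamb pseudofin pseudodense (dedekind b (hG.ne_bot hbG))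
    fun c hc => hG.inf_ne_bot hbG (hFG hc)
end
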